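/- arXiv:1702.08579 — 8 statements merged into one kernel-verified Lean document; each statement's English description precedes it below -/
import Mathlib

section
/- For the complete bipartite graph K_{a,n-a} on n vertices, F(K_{a,n-a}) = C(n,a), the binomial coefficient n choose a. -/
def GDiff {V : Type*} (G : SimpleGraph V) (π σ : Equiv.Perm V) : Prop :=
  ∃ i, G.Adj (π i) (σ i)

noncomputable def famF {V : Type*} (G : SimpleGraph V) : ℕ :=
  sSup {k | ∃ S : Finset (Equiv.Perm V), S.card = k ∧
    (S : Set (Equiv.Perm V)).Pairwise (GDiff G)}

/-- The complete bipartite graph `K_{a, n-a}` on vertex set `Fin n`,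
with parts `{i : i < a}` and `{i : a ≤ i}`. -/
def Kbip (n a : ℕ) : SimpleGraph (Fin n) where
  Adj i j := ((i : ℕ) < a ∧ ¬ (j : ℕ) < a) ∨ ((j : ℕ) < a ∧ ¬ (i : ℕ) < a)
  symm := ⟨fun i j h => Or.symm h⟩
  loopless := ⟨fun i h => by rcases h with ⟨h1, h2⟩ | ⟨h1, h2⟩ <;> exact h2 h1⟩

/-!
Two permutations are `K_{a,n-a}`-different exactly when they pull the part `A` of size `a` back to
different `a`-subsets, so a pairwise different family is one on which `π ↦ π⁻¹(A)` is injective.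
Every `a`-subset arises this way, hence the largest such family has `C(n, a)` members.
-/

open Finset Equiv
open scoped Pointwise

section Invariant

variable {V β : Type*} (G : SimpleGraph V) (φ : Perm V → β)

theorem pairwise_gDiff_iff_injOn (hφ : ∀ π σ, GDiff G π σ ↔ φ π ≠ φ σ) (S : Set (Perm V)) :
    S.Pairwise (GDiff G) ↔ S.InjOn φ := by
  refine ⟨fun h π hπ σ hσ hφπσ => ?_, fun h π hπ σ hσ hπσ => (hφ π σ).2 ?_⟩
  · by_contra hπσ
    exact (hφ π σ).1 (h hπ hσ hπσ) hφπσ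
  · exact fun hφπσ => hπσ (h hπ hσ hφπσ)

theorem famF_eq_card_image [Fintype V] [DecidableEq V] [DecidableEq β]
    (hφ : ∀ π σ, GDiff G π σ ↔ φ π ≠ φ σ) :
    famF G = (univ.image φ).card := by
  refine IsGreatest.csSup_eq ⟨?_, ?_⟩
  · obtain ⟨S, -, hinj, himage⟩ :=
      exists_subset_injOn_image_eq_of_surjOn (Set.univ : Set (Perm V)) (univ.image φ)
        (fun b hb => by simpa using hb)
    exact ⟨S, by rw [← himage, card_image_of_injOn hinj],
      (pairwise_gDiff_iff_injOn G φ hφ S).2 hinj⟩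
  · rintro k ⟨S, rfl, hS⟩
    rw [← card_image_of_injOn ((pairwise_gDiff_iff_injOn G φ hφ S).1 hS)]
    exact card_le_card (image_subset_image (subset_univ S))

end Invariant

section Bipartite

variable {V : Type*} [DecidableEq V] (G : SimpleGraph V) (A : Finset V)

theorem gDiff_iff_inv_smul_ne (hG : ∀ u v, G.Adj u v ↔ (u ∈ A ↔ v ∉ A)) (π σ : Perm V) :
    GDiff G π σ ↔ π⁻¹ • A ≠ σ⁻¹ • A := by
  simp only [GDiff, hG, Ne, Finset.ext_iff, mem_inv_smul_finset_iff, Perm.smul_def, not_forall]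
  exact exists_congr fun i => by tauto

theorem image_inv_smul_eq_powersetCard [Fintype V] :
    univ.image (fun π : Perm V => π⁻¹ • A) = powersetCard A.card univ := by
  ext B
  simp only [mem_image, mem_univ, true_and, mem_powersetCard, subset_univ]
  constructor
  · rintro ⟨π, rfl⟩
    exact card_smul_finset _ _
  · intro hB
    have := Set.powersetCard.isPretransitive (α := V) (n := A.card)
    obtain ⟨g, hg⟩ := MulAction.exists_smul_eq (Perm V)
      (Set.powersetCard.ofCard rfl) (Set.powersetCard.ofCard hB)
    exact ⟨g⁻¹, by simpa [inv_inv, ← Subtype.coe_inj] using hg⟩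

theorem famF_eq_choose_of_adj_iff [Fintype V] (hG : ∀ u v, G.Adj u v ↔ (u ∈ A ↔ v ∉ A)) :
    famF G = (Fintype.card V).choose A.card := by
  rw [famF_eq_card_image G _ (gDiff_iff_inv_smul_ne G A hG), image_inv_smul_eq_powersetCard,
    card_powersetCard, card_univ]

end Bipartite

theorem stmt1 (n a : ℕ) (ha : a ≤ n) : famF (Kbip n a) = n.choose a := by
  let A : Finset (Fin n) := {i | (i : ℕ) < a}
  have hG : ∀ i j, (Kbip n a).Adj i j ↔ (i ∈ A ↔ j ∉ A) := by
    intro i j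
    simp only [A, Kbip, mem_filter, mem_univ, true_and]
    tauto
  rw [famF_eq_choose_of_adj_iff _ A hG, Fintype.card_fin, Fin.card_filter_val_lt, min_eq_right ha]
end

section
/- Let G(n,a) be the graph obtained from K_{a,n-a} by removing a maximal matching. Then for all n ≥ 3 and 0 ≤ a ≤ n, F(G(n,a)) = C(n,a); and for n < 3, F(G(n,a)) = 1. -/
/-- `G(n,a)`: the complete bipartite graph `K_{a,n-a}` on `Fin n` (parts
`{i : i < a}` and `{i : a ≤ i}`) minus the maximal matching consisting of the
`min (a, n-a)` edges `{i, i + a}` for `i < min (a, n-a)`. -/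
def Gna (n a : ℕ) : SimpleGraph (Fin n) where
  Adj i j := (((i : ℕ) < a ∧ ¬ (j : ℕ) < a) ∨ ((j : ℕ) < a ∧ ¬ (i : ℕ) < a)) ∧
    (j : ℕ) ≠ (i : ℕ) + a ∧ (i : ℕ) ≠ (j : ℕ) + a
  symm := ⟨fun i j h => ⟨Or.symm h.1, h.2.2, h.2.1⟩⟩
  loopless := ⟨fun i h => by rcases h.1 with ⟨h1, h2⟩ | ⟨h1, h2⟩ <;> exact h2 h1⟩

open Finset

section Families

variable {α β : Type*}

instance [Fintype α] (G : SimpleGraph α) [DecidableRel G.Adj] (π σ : Equiv.Perm α) :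
    Decidable (GDiff G π σ) :=
  inferInstanceAs (Decidable (∃ i, G.Adj (π i) (σ i)))

lemma famF_eq_of_exists_of_forall_card_le {G : SimpleGraph α} {k : ℕ}
    (hex : ∃ S : Finset (Equiv.Perm α), S.card = k ∧
      (S : Set (Equiv.Perm α)).Pairwise (GDiff G))
    (hle : ∀ S : Finset (Equiv.Perm α),
      (S : Set (Equiv.Perm α)).Pairwise (GDiff G) → S.card ≤ k) :
    famF G = k :=
  IsGreatest.csSup_eq ⟨hex, by rintro _ ⟨S, rfl, hS⟩; exact hle S hS⟩

lemma exists_pairwise_gDiff_card_one (G : SimpleGraph α) :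
    ∃ S : Finset (Equiv.Perm α), S.card = 1 ∧ (S : Set (Equiv.Perm α)).Pairwise (GDiff G) :=
  ⟨{1}, card_singleton 1, by simp⟩

lemma GDiff.symm {G : SimpleGraph α} {π σ : Equiv.Perm α} (h : GDiff G π σ) : GDiff G σ π :=
  let ⟨i, hi⟩ := h; ⟨i, hi.symm⟩

instance (G : SimpleGraph α) : Std.Symm (GDiff G) := ⟨fun _ _ => GDiff.symm⟩

lemma GDiff.ne {G : SimpleGraph α} {π σ : Equiv.Perm α} (h : GDiff G π σ) : π ≠ σ := by
  rintro rfl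
  obtain ⟨i, hi⟩ := h
  exact hi.ne rfl

lemma GDiff.mul_right {G : SimpleGraph α} {π σ : Equiv.Perm α} (h : GDiff G π σ)
    (τ : Equiv.Perm α) : GDiff G (π * τ) (σ * τ) := by
  obtain ⟨i, hi⟩ := h
  exact ⟨τ⁻¹ i, by simpa using hi⟩

lemma GDiff.viaFintypeEmbedding [Fintype α] [DecidableEq β] [Fintype β] {G : SimpleGraph α}
    {H : SimpleGraph β} {f : α ↪ β} (hf : ∀ u v, G.Adj u v → H.Adj (f u) (f v))
    {π σ : Equiv.Perm α} (h : GDiff G π σ) :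
    GDiff H (π.viaFintypeEmbedding f) (σ.viaFintypeEmbedding f) := by
  obtain ⟨i, hi⟩ := h
  exact ⟨f i, by simpa using hf _ _ hi⟩

lemma Equiv.Perm.viaFintypeEmbedding_injective [Fintype α] [DecidableEq β] [Fintype β]
    (f : α ↪ β) : Function.Injective fun π : Equiv.Perm α => π.viaFintypeEmbedding f := by
  intro π σ h
  ext i
  simpa using DFunLike.congr_fun h (f i)

lemma not_gDiff_bot (π σ : Equiv.Perm α) : ¬ GDiff ⊥ π σ := fun ⟨_, hi⟩ => hi

lemma card_le_one_of_pairwise_gDiff_bot {S : Finset (Equiv.Perm α)}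
    (hS : (S : Set (Equiv.Perm α)).Pairwise (GDiff ⊥)) : S.card ≤ 1 :=
  card_le_one.2 fun _ hπ _ hσ => by_contra fun hne => not_gDiff_bot _ _ (hS hπ hσ hne)

lemma card_le_choose_of_pairwise_gDiff [Fintype α] {G : SimpleGraph α}
    (A : Finset α) (hA : ∀ u v, G.Adj u v → (u ∈ A ↔ v ∉ A)) {S : Finset (Equiv.Perm α)}
    (hS : (S : Set (Equiv.Perm α)).Pairwise (GDiff G)) :
    S.card ≤ (Fintype.card α).choose A.card := by
  have hmem : ∀ (π : Equiv.Perm α) i, i ∈ A.map π.symm.toEmbedding ↔ π i ∈ A := by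
    simp [mem_map_equiv]
  calc S.card ≤ (powersetCard A.card (univ : Finset α)).card := by
        refine card_le_card_of_injOn (fun π => A.map π.symm.toEmbedding)
          (fun π _ => by simp [mem_powersetCard]) fun π hπ σ hσ hπσ => ?_
        by_contra hne
        obtain ⟨i, hi⟩ := hS hπ hσ hne
        have := ((hmem π i).symm.trans (Finset.ext_iff.1 hπσ i)).trans (hmem σ i)
        have := hA _ _ hi
        tauto
    _ = (Fintype.card α).choose A.card := by rw [card_powersetCard, card_univ]

/-- After extending by the fixed points `w₁`, `w₂` and moving `w₁` to position `w₂`, every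
permutation of the first family differs from every one of the second at position `w₂`. -/
lemma exists_pairwise_gDiff_card_add [Fintype α] [Fintype β] [DecidableEq β]
    {G₁ G₂ : SimpleGraph α} {H : SimpleGraph β} {f₁ f₂ : α ↪ β}
    (hf₁ : ∀ u v, G₁.Adj u v → H.Adj (f₁ u) (f₁ v))
    (hf₂ : ∀ u v, G₂.Adj u v → H.Adj (f₂ u) (f₂ v))
    {w₁ w₂ : β} (hw₁ : w₁ ∉ Set.range f₁) (hw₂ : w₂ ∉ Set.range f₂) (hw : H.Adj w₁ w₂)
    {S₁ S₂ : Finset (Equiv.Perm α)} (hS₁ : (S₁ : Set (Equiv.Perm α)).Pairwise (GDiff G₁))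
    (hS₂ : (S₂ : Set (Equiv.Perm α)).Pairwise (GDiff G₂)) :
    ∃ T : Finset (Equiv.Perm β), T.card = S₁.card + S₂.card ∧
      (T : Set (Equiv.Perm β)).Pairwise (GDiff H) := by
  set e₁ : Equiv.Perm α → Equiv.Perm β := fun π => π.viaFintypeEmbedding f₁ * Equiv.swap w₁ w₂
  set e₂ : Equiv.Perm α → Equiv.Perm β := fun π => π.viaFintypeEmbedding f₂
  have he₁ : Function.Injective e₁ :=
    (mul_left_injective _).comp (Equiv.Perm.viaFintypeEmbedding_injective f₁)
  have he₂ : Function.Injective e₂ := Equiv.Perm.viaFintypeEmbedding_injective f₂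
  have hcross : ∀ π σ, GDiff H (e₁ π) (e₂ σ) := fun π σ => ⟨w₂, by
    simpa [e₁, e₂, Equiv.Perm.viaFintypeEmbedding_apply_notMem_range _ _ hw₁,
      Equiv.Perm.viaFintypeEmbedding_apply_notMem_range _ _ hw₂] using hw⟩
  refine ⟨S₁.image e₁ ∪ S₂.image e₂, ?_, ?_⟩
  · rw [card_union_of_disjoint, card_image_of_injective _ he₁, card_image_of_injective _ he₂]
    simp only [disjoint_left, mem_image]
    rintro _ ⟨π, -, rfl⟩ ⟨σ, -, hσ⟩
    exact (hcross π σ).ne hσ.symm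
  · rw [coe_union, Set.pairwise_union_of_symm, coe_image, coe_image,
      he₁.injOn.pairwise_image, he₂.injOn.pairwise_image]
    refine ⟨hS₁.mono' fun π σ h => (h.viaFintypeEmbedding hf₁).mul_right _,
      hS₂.mono' fun π σ h => h.viaFintypeEmbedding hf₂, ?_⟩
    rintro _ ⟨π, -, rfl⟩ _ ⟨σ, -, rfl⟩ -
    exact hcross π σ

end Families

section Gna

instance (n a : ℕ) : DecidableRel (Gna n a).Adj := fun i j =>
  inferInstanceAs (Decidable ((((i : ℕ) < a ∧ ¬ (j : ℕ) < a) ∨ ((j : ℕ) < a ∧ ¬ (i : ℕ) < a)) ∧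
    (j : ℕ) ≠ (i : ℕ) + a ∧ (i : ℕ) ≠ (j : ℕ) + a))

lemma Gna.card_le_choose {n a : ℕ} (ha : a ≤ n) {S : Finset (Equiv.Perm (Fin n))}
    (hS : (S : Set (Equiv.Perm (Fin n))).Pairwise (GDiff (Gna n a))) :
    S.card ≤ n.choose a := by
  have := card_le_choose_of_pairwise_gDiff {i : Fin n | (i : ℕ) < a}
    (fun u v h => by obtain ⟨h, -⟩ := h; simp only [mem_filter, mem_univ, true_and]; tauto) hS
  rwa [Fintype.card_fin, Fin.card_filter_val_lt, min_eq_right ha] at this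

lemma Gna.eq_bot_of_lt_three {n : ℕ} (hn : n < 3) (a : ℕ) : Gna n a = ⊥ := by
  ext i j
  simp only [SimpleGraph.bot_adj, iff_false]
  rintro ⟨h, h₁, h₂⟩
  have := i.2
  have := j.2
  omega

lemma Gna.adj_castSucc {n a : ℕ} (u v : Fin n) (h : (Gna n a).Adj u v) :
    (Gna (n + 1) a).Adj (Fin.castSuccEmb u) (Fin.castSuccEmb v) := h

/-- If `n + 1 ≠ 2a`, skip the vertex `a - 1`, whose partner `2a - 1` is not `n`. If `n + 1 = 2a`
the new vertex `n` is the partner of `a - 1`; skip `0` instead, shift the small side up by one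
and send the unmatched vertex `2a - 2` to `a`, the partner of `0`. -/
lemma Gna.exists_embedding_pred {n a : ℕ} (hn : 2 ≤ n) (ha₀ : 0 < a) (ha : a ≤ n) :
    ∃ (f : Fin n ↪ Fin (n + 1)) (w : Fin (n + 1)), w ∉ Set.range f ∧
      (∀ u v, (Gna n (a - 1)).Adj u v → (Gna (n + 1) a).Adj (f u) (f v)) ∧
      (Gna (n + 1) a).Adj w (Fin.last n) := by
  let g : ℕ → ℕ := fun x =>
    if n + 1 = 2 * a then (if x + 1 < a then x + 1 else if x + 2 < 2 * a then x + 2 else a)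
    else (if x + 1 < a then x else x + 1)
  let w : ℕ := if n + 1 = 2 * a then 0 else a - 1
  refine ⟨⟨fun x => ⟨g x, ?_⟩, fun x y hxy => ?_⟩, ⟨w, ?_⟩, ?_, fun x y hxy => ?_, ?_⟩
  · have := x.2; simp only [g]; split_ifs <;> omega
  · have := x.2; have := y.2
    simp only [g, Fin.mk.injEq] at hxy
    ext; split_ifs at hxy <;> omega
  · simp only [w]; split_ifs <;> omega
  · rintro ⟨x, hx⟩
    have hx : g x = w := congrArg Fin.val hx
    have := x.2
    simp only [g, w] at hx
    split_ifs at hx <;> omega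
  · have := x.2; have := y.2
    obtain ⟨h, h₁, h₂⟩ := hxy
    show (((g x < a ∧ ¬ g y < a) ∨ (g y < a ∧ ¬ g x < a)) ∧ g y ≠ g x + a ∧ g x ≠ g y + a)
    simp only [g]
    split_ifs <;> omega
  · show (((w < a ∧ ¬ n < a) ∨ (n < a ∧ ¬ w < a)) ∧ n ≠ w + a ∧ w ≠ n + a)
    simp only [w]
    split_ifs <;> omega

lemma Gna.exists_family_three {a : ℕ} (ha : a ≤ 3) :
    ∃ S : Finset (Equiv.Perm (Fin 3)), S.card = Nat.choose 3 a ∧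
      (S : Set (Equiv.Perm (Fin 3))).Pairwise (GDiff (Gna 3 a)) := by
  obtain rfl | rfl | rfl | rfl : a = 0 ∨ a = 1 ∨ a = 2 ∨ a = 3 := by omega
  any_goals exact exists_pairwise_gDiff_card_one _
  all_goals
    exact ⟨univ.image Equiv.addRight, by decide, fun π hπ σ hσ hne => by revert π σ; decide⟩

lemma Gna.exists_family {n a : ℕ} (hn : 3 ≤ n) (ha : a ≤ n) :
    ∃ S : Finset (Equiv.Perm (Fin n)), S.card = n.choose a ∧
      (S : Set (Equiv.Perm (Fin n))).Pairwise (GDiff (Gna n a)) := by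
  induction n, hn using Nat.le_induction generalizing a with
  | base => exact Gna.exists_family_three ha
  | succ n hn ih =>
    obtain rfl | ha₀ := Nat.eq_zero_or_pos a
    · simpa using exists_pairwise_gDiff_card_one (Gna (n + 1) 0)
    obtain rfl | han := ha.eq_or_lt
    · simpa using exists_pairwise_gDiff_card_one (Gna (n + 1) (n + 1))
    obtain ⟨f, w, hw, hf, hwn⟩ := Gna.exists_embedding_pred (by omega : 2 ≤ n) ha₀ (by omega)
    obtain ⟨S₁, hcard₁, hS₁⟩ := ih (a := a - 1) (by omega)
    obtain ⟨S₂, hcard₂, hS₂⟩ := ih (a := a) (by omega)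
    obtain ⟨T, hcard, hT⟩ := exists_pairwise_gDiff_card_add hf Gna.adj_castSucc hw
      (by simp) hwn hS₁ hS₂
    obtain ⟨b, rfl⟩ : ∃ b, a = b + 1 := ⟨a - 1, by omega⟩
    exact ⟨T, by rw [hcard, hcard₁, hcard₂, Nat.choose_succ_succ, Nat.add_sub_cancel], hT⟩

end Gna

theorem stmt4 (n a : ℕ) (ha : a ≤ n) :
    (3 ≤ n → famF (Gna n a) = n.choose a) ∧ (n < 3 → famF (Gna n a) = 1) :=
  ⟨fun hn => famF_eq_of_exists_of_forall_card_le (Gna.exists_family hn ha)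
      fun _ hS => Gna.card_le_choose ha hS,
    fun hn => famF_eq_of_exists_of_forall_card_le (exists_pairwise_gDiff_card_one _)
      fun _ hS => card_le_one_of_pairwise_gDiff_bot (Gna.eq_bot_of_lt_three hn a ▸ hS)⟩
end

section
/- Let G be a bipartite graph with an edge {x,y}, where x lies in the first part and y in the second part. If there exist a family F_x of pairwise G-different permutations of V(G) \ {x} and a family F_y of pairwise G-different permutations of V(G) \ {y}, then prepending x to each member of F_x and y to each member of F_y produces a family of |F_x| + |F_y| pairwise G-different permutations of V(G). Consequently F(G) ≥ F(G − x) + F(G − y). -/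
/-- Two listings (of possibly a subset of the vertices) are `G`-different if at
some common position their entries form an edge of `G`. -/
def listDiff {V : Type*} {m : ℕ} (G : SimpleGraph V) (f g : Fin m → V) : Prop :=
  ∃ i, G.Adj (f i) (g i)

lemma cons_inj_aux {n : ℕ} {x : Fin (n + 1)} {f g : Fin n → Fin (n + 1)}
    (h : (Fin.cons x f : Fin (n + 1) → Fin (n + 1)) = Fin.cons x g) : f = g := by
  funext i
  have := congrFun h i.succ
  simpa using this

theorem stmt5 (n : ℕ) (G : SimpleGraph (Fin (n + 1))) (x y : Fin (n + 1))
    (hxy : G.Adj x y)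
    (Fx Fy : Finset (Fin n → Fin (n + 1)))
    (hFx : ∀ f ∈ Fx, Function.Injective f ∧ Set.range f = {x}ᶜ)
    (hFxd : (Fx : Set (Fin n → Fin (n + 1))).Pairwise (listDiff G))
    (hFy : ∀ f ∈ Fy, Function.Injective f ∧ Set.range f = {y}ᶜ)
    (hFyd : (Fy : Set (Fin n → Fin (n + 1))).Pairwise (listDiff G)) :
    (Fx.image (fun f => (Fin.cons x f : Fin (n + 1) → Fin (n + 1))) ∪
        Fy.image (fun f => (Fin.cons y f : Fin (n + 1) → Fin (n + 1)))).card =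
      Fx.card + Fy.card ∧
    (∀ h ∈ Fx.image (fun f => (Fin.cons x f : Fin (n + 1) → Fin (n + 1))) ∪
        Fy.image (fun f => (Fin.cons y f : Fin (n + 1) → Fin (n + 1))),
      Function.Bijective h) ∧
    ((Fx.image (fun f => (Fin.cons x f : Fin (n + 1) → Fin (n + 1))) ∪
        Fy.image (fun f => (Fin.cons y f : Fin (n + 1) → Fin (n + 1))) :
        Finset (Fin (n + 1) → Fin (n + 1))) :
      Set (Fin (n + 1) → Fin (n + 1))).Pairwise (listDiff G) := by
  have hxney : x ≠ y := G.ne_of_adj hxy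
  -- disjointness of the two images
  have hdisj : Disjoint (Fx.image (fun f => (Fin.cons x f : Fin (n + 1) → Fin (n + 1))))
      (Fy.image (fun f => (Fin.cons y f : Fin (n + 1) → Fin (n + 1)))) := by
    rw [Finset.disjoint_left]
    rintro a ha hb
    obtain ⟨f, _, rfl⟩ := Finset.mem_image.1 ha
    obtain ⟨g, _, hg⟩ := Finset.mem_image.1 hb
    have := congrFun hg 0
    simp at this
    exact hxney this.symm
  refine ⟨?_, ?_, ?_⟩
  · rw [Finset.card_union_of_disjoint hdisj,
      Finset.card_image_of_injOn (fun f _ g _ h => cons_inj_aux h),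
      Finset.card_image_of_injOn (fun f _ g _ h => cons_inj_aux h)]
  · intro h hh
    rcases Finset.mem_union.1 hh with hh | hh
    · obtain ⟨f, hf, rfl⟩ := Finset.mem_image.1 hh
      obtain ⟨hinj, hran⟩ := hFx f hf
      have hinj' : Function.Injective (Fin.cons x f : Fin (n + 1) → Fin (n + 1)) := by
        intro a b hab
        cases a using Fin.cases with
        | zero =>
          cases b using Fin.cases with
          | zero => rfl
          | succ b =>
            exfalso
            simp only [Fin.cons_zero, Fin.cons_succ] at hab
            have : f b ∈ Set.range f := ⟨b, rfl⟩
            rw [hran] at this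
            exact this hab.symm
        | succ a =>
          cases b using Fin.cases with
          | zero =>
            exfalso
            simp only [Fin.cons_zero, Fin.cons_succ] at hab
            have : f a ∈ Set.range f := ⟨a, rfl⟩
            rw [hran] at this
            exact this hab
          | succ b =>
            simp only [Fin.cons_succ] at hab
            exact congrArg Fin.succ (hinj hab)
      exact (Finite.injective_iff_bijective).1 hinj'
    · obtain ⟨f, hf, rfl⟩ := Finset.mem_image.1 hh
      obtain ⟨hinj, hran⟩ := hFy f hf
      have hinj' : Function.Injective (Fin.cons y f : Fin (n + 1) → Fin (n + 1)) := by
        intro a b hab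
        cases a using Fin.cases with
        | zero =>
          cases b using Fin.cases with
          | zero => rfl
          | succ b =>
            exfalso
            simp only [Fin.cons_zero, Fin.cons_succ] at hab
            have : f b ∈ Set.range f := ⟨b, rfl⟩
            rw [hran] at this
            exact this hab.symm
        | succ a =>
          cases b using Fin.cases with
          | zero =>
            exfalso
            simp only [Fin.cons_zero, Fin.cons_succ] at hab
            have : f a ∈ Set.range f := ⟨a, rfl⟩
            rw [hran] at this
            exact this hab
          | succ b =>
            simp only [Fin.cons_succ] at hab
            exact congrArg Fin.succ (hinj hab)
      exact (Finite.injective_iff_bijective).1 hinj'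
  · intro a ha b hb hab
    simp only [Finset.coe_union, Set.mem_union, Finset.coe_image, Set.mem_image,
      Finset.mem_coe] at ha hb
    rcases ha with ⟨f, hf, rfl⟩ | ⟨f, hf, rfl⟩ <;>
      rcases hb with ⟨g, hg, rfl⟩ | ⟨g, hg, rfl⟩
    · have hfg : f ≠ g := fun h => hab (by rw [h])
      obtain ⟨i, hi⟩ := hFxd hf hg hfg
      exact ⟨i.succ, by simpa using hi⟩
    · exact ⟨0, by simpa using hxy⟩
    · exact ⟨0, by simpa using hxy.symm⟩
    · have hfg : f ≠ g := fun h => hab (by rw [h])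
      obtain ⟨i, hi⟩ := hFyd hf hg hfg
      exact ⟨i.succ, by simpa using hi⟩
end

section
/- For all nonnegative integers n, a, Δ with n ≥ 2Δ and Δ ≤ a ≤ n − Δ, every n-vertex bipartite graph G that is a subgraph of K_{a,n−a} whose bipartite complement has maximum degree at most Δ satisfies F(G) ≥ C(n − 2Δ, a − Δ). -/
/-! Work with injective sequences instead of permutations. Let `A`, `B` be disjoint, every
vertex of `A` miss at most `Δ` vertices of `B`, `s ≤ |A|` and `t + Δ ≤ |B|`; then there are
`C(s + t, s)` pairwise `G`-different injective sequences of length `|A| + |B|` in `A ∪ B`.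
For `s, t > 0` pick an edge `lr` with `l ∈ A`, `r ∈ B` (it exists because `|B| > Δ`), prepend
`l` to a family for `(A - l, B)` and `r` to a family for `(A, B - r)`: sequences from the same
half differ in their tails, sequences from different halves already at position `0`, and
Pascal's rule counts them. For the two sides of `K_{a,n-a}`, `s = a - Δ` and `t = n - a - Δ`,
the sequences have length `n` and are permutations. -/

open Finset Function

namespace SimpleGraph

variable {V : Type*} (G : SimpleGraph V)

def IsGDiffFamily (C : Finset V) {m : ℕ} (S : Finset (Fin m → V)) : Prop :=
  (∀ f ∈ S, Injective f ∧ ∀ i, f i ∈ C) ∧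
    (S : Set (Fin m → V)).Pairwise fun f g => ∃ i, G.Adj (f i) (g i)

variable {G}

theorem exists_isGDiffFamily_card_eq_one {C : Finset V} {m : ℕ} (hm : #C = m) :
    ∃ S : Finset (Fin m → V), #S = 1 ∧ G.IsGDiffFamily C S := by
  subst hm
  refine ⟨{fun i => (C.equivFin.symm i : V)}, card_singleton _, ?_, by simp⟩
  simp only [mem_singleton, forall_eq]
  exact ⟨Subtype.val_injective.comp C.equivFin.symm.injective, fun i => (C.equivFin.symm i).2⟩

theorem exists_adj_of_card_filter_not_adj_lt {x : V} {B : Finset V} [DecidableRel G.Adj]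
    (h : #{y ∈ B | ¬ G.Adj x y} < #B) : ∃ y ∈ B, G.Adj x y := by
  by_contra! hB
  rw [filter_true_of_mem hB] at h
  exact h.false

variable [DecidableEq V]

theorem IsGDiffFamily.image_cons {C : Finset V} {m : ℕ} {S : Finset (Fin m → V)}
    (hS : G.IsGDiffFamily C S) {u : V} (hu : u ∉ C) :
    G.IsGDiffFamily (insert u C) (S.image (Fin.cons u) : Finset (Fin (m + 1) → V)) := by
  refine ⟨?_, ?_⟩
  · simp only [mem_image, forall_exists_index, and_imp]
    rintro _ g hg rfl
    obtain ⟨hinj, hC⟩ := hS.1 g hg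
    refine ⟨Fin.cons_injective_of_injective (fun ⟨i, hi⟩ => hu (hi ▸ hC i)) hinj, ?_⟩
    exact Fin.cases (by simp) fun i => by simp [hC i]
  · simp only [coe_image]
    rintro _ ⟨g₁, hg₁, rfl⟩ _ ⟨g₂, hg₂, rfl⟩ hne
    obtain ⟨i, hi⟩ := hS.2 hg₁ hg₂ fun h => hne (h ▸ rfl)
    exact ⟨i.succ, by simpa using hi⟩

theorem IsGDiffFamily.union {C : Finset V} {m : ℕ} {S₁ S₂ : Finset (Fin m → V)}
    (h₁ : G.IsGDiffFamily C S₁) (h₂ : G.IsGDiffFamily C S₂)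
    (h : ∀ f ∈ S₁, ∀ g ∈ S₂, ∃ i, G.Adj (f i) (g i)) :
    G.IsGDiffFamily C (S₁ ∪ S₂) := by
  refine ⟨fun f hf => (mem_union.mp hf).elim (h₁.1 f) (h₂.1 f), ?_⟩
  rw [coe_union, Set.pairwise_union]
  refine ⟨h₁.2, h₂.2, fun f hf g hg _ => ?_⟩
  obtain ⟨i, hi⟩ := h f hf g hg
  exact ⟨⟨i, hi⟩, ⟨i, hi.symm⟩⟩

theorem IsGDiffFamily.image_cons_union_image_cons {C₁ C₂ : Finset V} {m : ℕ}
    {S₁ S₂ : Finset (Fin m → V)} (h₁ : G.IsGDiffFamily C₁ S₁) (h₂ : G.IsGDiffFamily C₂ S₂)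
    {u v : V} (hu : u ∉ C₁) (hv : v ∉ C₂) (hC : insert u C₁ = insert v C₂)
    (huv : G.Adj u v) :
    G.IsGDiffFamily (insert u C₁)
      (S₁.image (Fin.cons u) ∪ S₂.image (Fin.cons v) : Finset (Fin (m + 1) → V)) := by
  refine (h₁.image_cons hu).union (hC ▸ h₂.image_cons hv) ?_
  simp only [mem_image]
  rintro _ ⟨g₁, -, rfl⟩ _ ⟨g₂, -, rfl⟩
  exact ⟨0, by simpa using huv⟩

theorem card_image_cons_union_image_cons {m : ℕ} {u v : V} (huv : u ≠ v)
    (S₁ S₂ : Finset (Fin m → V)) :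
    #(S₁.image (Fin.cons u) ∪ S₂.image (Fin.cons v) : Finset (Fin (m + 1) → V)) =
      #S₁ + #S₂ := by
  rw [card_union_of_disjoint, card_image_of_injective _ (Fin.cons_right_injective _),
    card_image_of_injective _ (Fin.cons_right_injective _)]
  rw [Finset.disjoint_left]
  simp only [mem_image]
  rintro _ ⟨g₁, -, rfl⟩ ⟨g₂, -, h⟩
  exact huv (Fin.cons_inj.mp h).1.symm

theorem exists_isGDiffFamily_card_eq_choose [DecidableRel G.Adj] {Δ : ℕ} (s t : ℕ)
    {A B : Finset V} {m : ℕ} (hAB : Disjoint A B) (hm : #A + #B = m) (hs : s ≤ #A)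
    (ht : t + Δ ≤ #B) (hdeg : ∀ x ∈ A, #{y ∈ B | ¬ G.Adj x y} ≤ Δ) :
    ∃ S : Finset (Fin m → V), #S = (s + t).choose s ∧ G.IsGDiffFamily (A ∪ B) S := by
  induction s generalizing t A B m with
  | zero =>
    simpa using exists_isGDiffFamily_card_eq_one ((card_union_of_disjoint hAB).trans hm)
  | succ s ihs =>
    induction t generalizing A B m with
    | zero =>
      simpa using exists_isGDiffFamily_card_eq_one ((card_union_of_disjoint hAB).trans hm)
    | succ t iht =>
      obtain ⟨l, hl⟩ : A.Nonempty := card_pos.mp (by omega)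
      obtain ⟨r, hr, hlr⟩ := exists_adj_of_card_filter_not_adj_lt
        ((hdeg l hl).trans_lt (by omega))
      obtain ⟨m, rfl⟩ : ∃ m', m = m' + 1 := ⟨m - 1, by omega⟩
      have hlB : l ∉ B := Finset.disjoint_left.mp hAB hl
      have hrA : r ∉ A := Finset.disjoint_right.mp hAB hr
      have hAl := card_erase_of_mem hl
      have hBr := card_erase_of_mem hr
      obtain ⟨S₁, hS₁, h₁⟩ := ihs (t + 1) (A := A.erase l) (m := m)
        (disjoint_of_subset_left (erase_subset _ _) hAB)
        (by omega) (by omega) ht (fun x hx => hdeg x (mem_of_mem_erase hx))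
      obtain ⟨S₂, hS₂, h₂⟩ := iht (B := B.erase r) (m := m)
        (disjoint_of_subset_right (erase_subset _ _) hAB)
        (by omega) hs (by omega)
        fun x hx => (card_le_card (filter_subset_filter _ (erase_subset _ _))).trans (hdeg x hx)
      have hC₁ : insert l (A.erase l ∪ B) = A ∪ B := by rw [← insert_union, insert_erase hl]
      have hC₂ : insert r (A ∪ B.erase r) = A ∪ B := by rw [← union_insert, insert_erase hr]
      refine ⟨_, ?_, hC₁ ▸ h₁.image_cons_union_image_cons h₂ (by simp [hlB]) (by simp [hrA])
        (hC₁.trans hC₂.symm) hlr⟩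
      rw [card_image_cons_union_image_cons hlr.ne, hS₁, hS₂, Nat.add_right_comm s 1,
        show s + 1 + (t + 1) = s + t + 1 + 1 by omega, Nat.choose_succ_succ']
      rfl

theorem card_le_famF [Fintype V] {S : Finset (Equiv.Perm V)}
    (hS : (S : Set (Equiv.Perm V)).Pairwise (GDiff G)) : #S ≤ famF G :=
  le_csSup ⟨Fintype.card (Equiv.Perm V), by rintro _ ⟨T, rfl, -⟩; exact card_le_univ T⟩
    ⟨S, rfl, hS⟩

theorem IsGDiffFamily.card_le_famF [Fintype V] {C : Finset V}
    {S : Finset (Fin (Fintype.card V) → V)} (hS : G.IsGDiffFamily C S) : #S ≤ famF G := by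
  have hbij (f : S) : Bijective (f : Fin (Fintype.card V) → V) :=
    (Fintype.bijective_iff_injective_and_card _).2 ⟨(hS.1 f f.2).1, Fintype.card_fin _⟩
  let e := Fintype.equivFin V
  let π (f : S) : Equiv.Perm V := e.trans (Equiv.ofBijective f (hbij f))
  have hπ (f : S) (i : V) : π f i = (f : Fin (Fintype.card V) → V) (e i) := rfl
  have hπ_inj : Injective π := fun f g h => Subtype.ext <| funext fun j => by
    simpa [hπ] using DFunLike.congr_fun h (e.symm j)
  calc #S = #(univ.image π) := by
        rw [card_image_of_injective _ hπ_inj, card_univ, Fintype.card_coe]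
    _ ≤ famF G := SimpleGraph.card_le_famF <| by
      simp only [coe_image, coe_univ, Set.image_univ]
      rintro _ ⟨f, rfl⟩ _ ⟨g, rfl⟩ hne
      obtain ⟨j, hj⟩ := hS.2 f.2 g.2 fun h => hne (congrArg π (Subtype.ext h))
      exact ⟨e.symm j, by simpa [hπ] using hj⟩

end SimpleGraph

theorem stmt6_general (n a Δ : ℕ) (h2 : Δ ≤ a) (h3 : a ≤ n - Δ)
    (G : SimpleGraph (Fin n))
    (hdeg : ∀ v : Fin n,
      ({w : Fin n | (Kbip n a).Adj v w ∧ ¬ G.Adj v w} : Set (Fin n)).ncard ≤ Δ) :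
    (n - 2 * Δ).choose (a - Δ) ≤ famF G := by
  classical
  let A : Finset (Fin n) := {i | (i : ℕ) < a}
  have hA : #A = a := by rw [Fin.card_filter_val_lt]; omega
  have hdegA (x : Fin n) (hx : x ∈ A) : #{y ∈ Aᶜ | ¬ G.Adj x y} ≤ Δ := by
    refine le_trans ?_ (hdeg x)
    rw [← Set.ncard_coe_finset]
    refine Set.ncard_le_ncard (fun y hy => ?_) (Set.toFinite _)
    simp only [A, coe_filter, mem_compl, mem_filter, mem_univ, true_and,
      Set.mem_ofPred_eq] at hx hy ⊢
    exact ⟨Or.inl ⟨hx, hy.1⟩, hy.2⟩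
  obtain ⟨S, hS, hfam⟩ := G.exists_isGDiffFamily_card_eq_choose (a - Δ) (n - a - Δ)
    disjoint_compl_right (card_add_card_compl A) (by omega)
    (by rw [card_compl, Fintype.card_fin]; omega) hdegA
  rw [show n - 2 * Δ = a - Δ + (n - a - Δ) by omega, ← hS]
  exact hfam.card_le_famF

/-- For `n ≥ 2Δ` and `Δ ≤ a ≤ n − Δ`, every `n`-vertex bipartite subgraph `G`
of `K_{a,n−a}` whose bipartite complement has maximum degree at most `Δ`
satisfies `F(G) ≥ C(n − 2Δ, a − Δ)`. -/
theorem stmt6 (n a Δ : ℕ) (h1 : 2 * Δ ≤ n) (h2 : Δ ≤ a) (h3 : a ≤ n - Δ)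
    (G : SimpleGraph (Fin n)) (hsub : G ≤ Kbip n a)
    (hdeg : ∀ v : Fin n,
      ({w : Fin n | (Kbip n a).Adj v w ∧ ¬ G.Adj v w} : Set (Fin n)).ncard ≤ Δ) :
    (n - 2 * Δ).choose (a - Δ) ≤ famF G :=
  stmt6_general n a Δ h2 h3 G hdeg
end

section
/- If G is the disjoint union of graphs G₁ and G₂, then F(G) ≥ F(G₁) · F(G₂): given a pairwise G₁-different family of permutations of V(G₁) and a pairwise G₂-different family of permutations of V(G₂), all concatenations π·σ form a pairwise G-different family of permutations of V(G). -/
/-- The disjoint union of two graphs. -/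
def sumGraph {α β : Type*} (G₁ : SimpleGraph α) (G₂ : SimpleGraph β) :
    SimpleGraph (α ⊕ β) where
  Adj x y :=
    match x, y with
    | .inl a, .inl b => G₁.Adj a b
    | .inr a, .inr b => G₂.Adj a b
    | _, _ => False
  symm := by
    constructor
    intro x y h
    cases x <;> cases y <;> simp_all <;> exact h.symm
  loopless := by
    constructor
    intro x h
    cases x <;> simp_all

/-!
The concatenation `Fin.append (Sum.inl ∘ π) (Sum.inr ∘ σ)` is `Sum.map π σ` read through
`Fin (m + k) ≃ Fin m ⊕ Fin k`, so it is bijective when `π` and `σ` are and it determines both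
factors. Two distinct concatenations differ in one factor, and an edge of `G₁` or `G₂` at a common
position of that factor stays an edge of the disjoint union at the shifted position.
-/

section Concat

variable {α β : Type*} {m k : ℕ}

theorem Fin.append_comp_inl_inr (f : Fin m → α) (g : Fin k → β) :
    Fin.append (Sum.inl ∘ f) (Sum.inr ∘ g) = Sum.map f g ∘ finSumFinEquiv.symm := by
  funext i
  refine Fin.addCases (fun i => ?_) (fun i => ?_) i <;> simp

theorem Fin.append_comp_inl_inr_injective2 :
    Function.Injective2 fun (f : Fin m → α) (g : Fin k → β) =>
      Fin.append (Sum.inl ∘ f) (Sum.inr ∘ g) := by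
  intro f₁ f₂ g₁ g₂ h
  dsimp only at h
  rw [Fin.append_comp_inl_inr, Fin.append_comp_inl_inr,
    finSumFinEquiv.symm.surjective.injective_comp_right.eq_iff] at h
  exact ⟨funext fun i => Sum.inl_injective (congrFun h (.inl i)),
    funext fun i => Sum.inr_injective (congrFun h (.inr i))⟩

theorem Function.Bijective.finAppend_comp_inl_inr {f : Fin m → α} {g : Fin k → β}
    (hf : f.Bijective) (hg : g.Bijective) :
    (Fin.append (Sum.inl ∘ f) (Sum.inr ∘ g)).Bijective := by
  rw [Fin.append_comp_inl_inr]
  exact (hf.sumMap hg).comp finSumFinEquiv.symm.bijective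

variable {G₁ : SimpleGraph α} {G₂ : SimpleGraph β}

theorem listDiff.append_left {f₁ f₂ : Fin m → α} (h : listDiff G₁ f₁ f₂) (g₁ g₂ : Fin k → β) :
    listDiff (sumGraph G₁ G₂) (Fin.append (Sum.inl ∘ f₁) (Sum.inr ∘ g₁))
      (Fin.append (Sum.inl ∘ f₂) (Sum.inr ∘ g₂)) := by
  obtain ⟨i, hi⟩ := h
  exact ⟨Fin.castAdd k i, by simpa [sumGraph] using hi⟩

theorem listDiff.append_right {g₁ g₂ : Fin k → β} (h : listDiff G₂ g₁ g₂) (f₁ f₂ : Fin m → α) :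
    listDiff (sumGraph G₁ G₂) (Fin.append (Sum.inl ∘ f₁) (Sum.inr ∘ g₁))
      (Fin.append (Sum.inl ∘ f₂) (Sum.inr ∘ g₂)) := by
  obtain ⟨i, hi⟩ := h
  exact ⟨Fin.natAdd m i, by simpa [sumGraph] using hi⟩

theorem Set.Pairwise.listDiff_image_append {s : Set (Fin m → α)} {t : Set (Fin k → β)}
    (hs : s.Pairwise (listDiff G₁)) (ht : t.Pairwise (listDiff G₂)) :
    ((fun p : (Fin m → α) × (Fin k → β) => Fin.append (Sum.inl ∘ p.1) (Sum.inr ∘ p.2)) ''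
      s ×ˢ t).Pairwise (listDiff (sumGraph G₁ G₂)) := by
  rintro _ ⟨⟨f₁, g₁⟩, ⟨hf₁, hg₁⟩, rfl⟩ _ ⟨⟨f₂, g₂⟩, ⟨hf₂, hg₂⟩, rfl⟩ hne
  by_cases hf : f₁ = f₂
  · subst hf
    have hg : g₁ ≠ g₂ := fun hg => hne (by rw [hg])
    exact (ht hg₁ hg₂ hg).append_right f₁ f₁
  · exact (hs hf₁ hf₂ hf).append_left g₁ g₂

end Concat

theorem stmt8 (m k : ℕ) (G₁ : SimpleGraph (Fin m)) (G₂ : SimpleGraph (Fin k))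
    (S₁ : Finset (Fin m → Fin m)) (S₂ : Finset (Fin k → Fin k))
    (hS₁ : ∀ f ∈ S₁, Function.Bijective f)
    (hS₂ : ∀ f ∈ S₂, Function.Bijective f)
    (hd₁ : (S₁ : Set (Fin m → Fin m)).Pairwise (listDiff G₁))
    (hd₂ : (S₂ : Set (Fin k → Fin k)).Pairwise (listDiff G₂)) :
    ((S₁ ×ˢ S₂).image fun p =>
        (Fin.append (Sum.inl ∘ p.1) (Sum.inr ∘ p.2) : Fin (m + k) → Fin m ⊕ Fin k)).card =
      S₁.card * S₂.card ∧
    (∀ h ∈ (S₁ ×ˢ S₂).image fun p =>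
        (Fin.append (Sum.inl ∘ p.1) (Sum.inr ∘ p.2) : Fin (m + k) → Fin m ⊕ Fin k),
      Function.Bijective h) ∧
    (((S₁ ×ˢ S₂).image fun p =>
        (Fin.append (Sum.inl ∘ p.1) (Sum.inr ∘ p.2) : Fin (m + k) → Fin m ⊕ Fin k) :
        Finset (Fin (m + k) → Fin m ⊕ Fin k)) :
      Set (Fin (m + k) → Fin m ⊕ Fin k)).Pairwise (listDiff (sumGraph G₁ G₂)) := by
  refine ⟨?_, ?_, ?_⟩
  · exact (Finset.card_image_of_injective _ Fin.append_comp_inl_inr_injective2.uncurry).trans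
      (Finset.card_product S₁ S₂)
  · simp only [Finset.forall_mem_image, Finset.mem_product]
    rintro ⟨f, g⟩ ⟨hf, hg⟩
    exact (hS₁ f hf).finAppend_comp_inl_inr (hS₂ g hg)
  · rw [Finset.coe_image, Finset.coe_product]
    exact hd₁.listDiff_image_append hd₂
end

section
/- F_∞(M(2)) = 3: the maximum size of a family of pairwise M(2)-different partial permutations of the single edge {1,2} with arbitrarily many blank spaces is 3. -/
def validPerm2 {c : ℕ} (f : Fin c → Option (Fin 2)) : Prop :=
  ∀ v : Fin 2, ∃! i, f i = some v

def conflict {c : ℕ} (f g : Fin c → Option (Fin 2)) : Prop :=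
  ∃ i, (f i = some 0 ∧ g i = some 1) ∨ (f i = some 1 ∧ g i = some 0)

/-! Fix `f` in the family. Every other member `g` conflicts with `f`, either at the position
of `f`'s `0` (where `g` is `1`) or at the position of `f`'s `1` (where `g` is `0`). Two members
conflicting with `f` in the same way share a value at a common position, and two partial
permutations of `{1,2}` that agree somewhere cannot conflict: each value is taken only once.
So the other members are told apart by one bit, and there are at most two of them. -/

variable {c : ℕ}

lemma not_conflict_of_eq_some {g h : Fin c → Option (Fin 2)} {i : Fin c} {v : Fin 2}
    (hg : validPerm2 g) (hh : validPerm2 h) (hgi : g i = some v) (hhi : h i = some v) :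
    ¬ conflict g h := by
  rintro ⟨k, ⟨hgk, hhk⟩ | ⟨hgk, hhk⟩⟩ <;> fin_cases v
  · obtain rfl := (hg 0).unique hgk hgi
    simp_all
  · obtain rfl := (hh 1).unique hhk hhi
    simp_all
  · obtain rfl := (hh 0).unique hhk hhi
    simp_all
  · obtain rfl := (hg 1).unique hgk hgi
    simp_all

lemma not_conflict_of_conflict_at_same_value {f g h : Fin c → Option (Fin 2)} {v w : Fin 2}
    (hf : validPerm2 f) (hg : validPerm2 g) (hh : validPerm2 h)
    (hfg : ∃ i, f i = some v ∧ g i = some w) (hfh : ∃ i, f i = some v ∧ h i = some w) :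
    ¬ conflict g h := by
  obtain ⟨i, hfi, hgi⟩ := hfg
  obtain ⟨j, hfj, hhj⟩ := hfh
  obtain rfl := (hf v).unique hfj hfi
  exact not_conflict_of_eq_some hg hh hgi hhj

lemma conflict.exists_one_zero {f g : Fin c → Option (Fin 2)} (hfg : conflict f g)
    (h01 : ¬ ∃ i, f i = some 0 ∧ g i = some 1) : ∃ i, f i = some 1 ∧ g i = some 0 := by
  obtain ⟨i, hi | hi⟩ := hfg
  exacts [absurd ⟨i, hi⟩ h01, ⟨i, hi⟩]

theorem card_le_three_of_pairwise_conflict (S : Finset (Fin c → Option (Fin 2)))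
    (hS : ∀ f ∈ S, validPerm2 f) (hconf : (S : Set (Fin c → Option (Fin 2))).Pairwise conflict) :
    S.card ≤ 3 := by
  rcases S.eq_empty_or_nonempty with rfl | ⟨f, hf⟩
  · simp
  have hinj : Set.InjOn (fun g : Fin c → Option (Fin 2) => ∃ i, f i = some 0 ∧ g i = some 1)
      (S.erase f) := by
    intro g hg h hh hgh
    have hgS := Finset.mem_of_mem_erase hg
    have hhS := Finset.mem_of_mem_erase hh
    by_contra hne
    refine absurd (hconf hgS hhS hne) ?_
    by_cases hg01 : ∃ i, f i = some 0 ∧ g i = some 1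
    · exact not_conflict_of_conflict_at_same_value (hS f hf) (hS g hgS) (hS h hhS)
        hg01 ((eq_iff_iff.mp hgh).mp hg01)
    · have hh01 : ¬ ∃ i, f i = some 0 ∧ h i = some 1 :=
        fun h01 => hg01 ((eq_iff_iff.mp hgh).mpr h01)
      exact not_conflict_of_conflict_at_same_value (hS f hf) (hS g hgS) (hS h hhS)
        ((hconf hf hgS (Finset.ne_of_mem_erase hg).symm).exists_one_zero hg01)
        ((hconf hf hhS (Finset.ne_of_mem_erase hh).symm).exists_one_zero hh01)
  have hcard : (S.erase f).card ≤ 2 := by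
    simpa using Finset.card_le_card_of_injOn _ (fun _ _ => Finset.mem_univ _) hinj
  have := Finset.card_erase_of_mem hf
  omega

theorem exists_card_three_pairwise_conflict :
    ∃ S : Finset (Fin 3 → Option (Fin 2)), (∀ f ∈ S, validPerm2 f) ∧
      (S : Set (Fin 3 → Option (Fin 2))).Pairwise conflict ∧ S.card = 3 := by
  refine ⟨{![some 0, some 1, none], ![none, some 0, some 1], ![some 1, none, some 0]}, ?_, ?_, ?_⟩
  · intro f hf
    fin_cases hf <;> intro v <;> fin_cases v <;> (unfold ExistsUnique; decide)
  · intro f hf g hg hne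
    simp only [Finset.coe_insert, Set.mem_insert_iff, Finset.coe_singleton,
      Set.mem_singleton_iff] at hf hg
    rcases hf with rfl | rfl | rfl <;> rcases hg with rfl | rfl | rfl <;>
      first
      | exact absurd rfl hne
      | (unfold conflict; decide)
  · decide

/-- `F_∞(M(2)) = 3`: any family of pairwise `M(2)`-different partial
permutations of the single edge `{1,2}` with arbitrarily many blanks has size
at most `3`, and some such family has size exactly `3`. -/
theorem stmt15 :
    (∀ (c : ℕ) (S : Finset (Fin c → Option (Fin 2))), (∀ f ∈ S, validPerm2 f) →
      (S : Set (Fin c → Option (Fin 2))).Pairwise conflict → S.card ≤ 3) ∧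
    (∃ (c : ℕ) (S : Finset (Fin c → Option (Fin 2))), (∀ f ∈ S, validPerm2 f) ∧
      (S : Set (Fin c → Option (Fin 2))).Pairwise conflict ∧ S.card = 3) :=
  ⟨fun _ S => card_le_three_of_pairwise_conflict S, ⟨3, exists_card_three_pairwise_conflict⟩⟩
end

section
/- For even n > 4, F_∞(M(n)) < 4 · F_∞(M(n−2)). Consequently, given F_∞(M(4)) = 9, for all even n > 4 we have F_∞(M(n)) < 9 · 2^{n−4}. -/
/-- The perfect matching `M(n)` on vertices `Fin n` with edges
`(0,1), (2,3), …` (standing for `(1,2), (3,4), …`). -/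
def MatchG (n : ℕ) : SimpleGraph (Fin n) where
  Adj u v := (u : ℕ) / 2 = (v : ℕ) / 2 ∧ u ≠ v
  symm := ⟨fun _ _ h => ⟨h.1.symm, h.2.symm⟩⟩
  loopless := ⟨fun _ h => h.2 rfl⟩

/-- A permutation of the vertices `Fin n` with blanks among `c` positions. -/
def validPerm {n c : ℕ} (f : Fin c → Option (Fin n)) : Prop :=
  ∀ v : Fin n, ∃! i, f i = some v

/-- Two permutations-with-blanks are `M(n)`-different if at some position their
entries form a matching edge. -/
def mDiff {n c : ℕ} (f g : Fin c → Option (Fin n)) : Prop :=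
  ∃ i v w, f i = some v ∧ g i = some w ∧ (MatchG n).Adj v w

/-- `F_∞(M(n))`: the maximum size of a family of pairwise `M(n)`-different
permutations of the vertices of `M(n)` with arbitrarily many blank spaces. -/
noncomputable def FinfM (n : ℕ) : ℕ :=
  sSup {k | ∃ (c : ℕ) (S : Finset (Fin c → Option (Fin n))),
    (∀ f ∈ S, validPerm f) ∧
    (S : Set (Fin c → Option (Fin n))).Pairwise mDiff ∧ S.card = k}

/-! Let `S` be a pairwise `M(n + 2)`-different family. Colour the positions at random with two
colours and keep the `f ∈ S` whose vertex `0` sits on a `true` position and whose vertex `1` sits on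
a `false` one. On average a quarter of `S` survives, and the all-`true` colouring keeps nothing, so
some colouring keeps more than `|S| / 4`. Two survivors cannot differ through the edge `{0, 1}`:
that would put one position in both colours. So after turning `0` and `1` into blanks and
renumbering the rest they are still pairwise `M(n)`-different, whence `|S| < 4 F_∞(M(n))`.
Started from `n < 2`, where a family has at most one member, this shows that every `F_∞(M(n))` is
the maximum of a bounded set rather than the junk value `sSup` of an unbounded one; iterating it
from `F_∞(M(4)) = 9` gives the second bound. -/

open Finset Function

theorem card_filter_eq_true_and_eq_false {ι : Type*} [Fintype ι] [DecidableEq ι] {a b : ι}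
    (hab : a ≠ b) : 4 * #{χ : ι → Bool | χ a = true ∧ χ b = false} = 2 ^ Fintype.card ι := by
  set t : ι → Finset Bool := fun j ↦ if j = b then {false} else if j = a then {true} else univ
  have hfilter : ({χ : ι → Bool | χ a = true ∧ χ b = false} : Finset _) = Fintype.piFinset t := by
    ext χ
    simp only [mem_filter, mem_univ, true_and, Fintype.mem_piFinset, t]
    refine ⟨fun h j ↦ ?_, fun h ↦ ⟨by simpa [hab] using h a, by simpa using h b⟩⟩
    split_ifs <;> simp_all
  have hcard : ∀ j, #(t j) = update (update (fun _ ↦ 2) a 1) b 1 j := fun j ↦ by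
    simp only [t, update_apply]
    split_ifs <;> simp
  have hrest : #((univ \ {b}) \ {a} : Finset ι) + 2 = Fintype.card ι := by
    have := Fintype.one_lt_card_iff.mpr ⟨a, b, hab⟩
    simp only [card_sdiff, card_univ, inter_univ, card_singleton, mem_sdiff, mem_univ,
      mem_singleton, hab, not_false_eq_true, and_self, singleton_inter_of_mem]
    omega
  rw [hfilter, Fintype.card_piFinset, Fintype.prod_congr _ _ hcard,
    prod_update_of_mem (mem_univ _), prod_update_of_mem (by simp [hab]), prod_const, ← hrest]
  ring

theorem exists_lt_four_mul_card_filter {α ι : Type*} [Fintype ι] [DecidableEq ι]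
    {S : Finset α} (hS : S.Nonempty) {A B : α → ι} (hAB : ∀ f ∈ S, A f ≠ B f) :
    ∃ χ : ι → Bool, #S < 4 * #{f ∈ S | χ (A f) = true ∧ χ (B f) = false} := by
  by_contra! h
  have hdouble : ∑ χ : ι → Bool, 4 * #{f ∈ S | χ (A f) = true ∧ χ (B f) = false}
      = ∑ _χ : ι → Bool, #S :=
    calc _ = ∑ f ∈ S, 4 * #{χ : ι → Bool | χ (A f) = true ∧ χ (B f) = false} := by
          rw [← mul_sum, ← mul_sum]
          exact congrArg _ (sum_card_bipartiteAbove_eq_sum_card_bipartiteBelow _)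
      _ = ∑ f ∈ S, 2 ^ Fintype.card ι :=
          sum_congr rfl fun f hf ↦ card_filter_eq_true_and_eq_false (hAB f hf)
      _ = ∑ _χ : ι → Bool, #S := by simp [mul_comm]
  exact (sum_lt_sum (fun χ _ ↦ h χ) ⟨fun _ ↦ true, mem_univ _, by simpa using hS.card_pos⟩).ne
    hdouble

def mDiffFamilySizes (n : ℕ) : Set ℕ :=
  {k | ∃ (c : ℕ) (S : Finset (Fin c → Option (Fin n))),
    (∀ f ∈ S, validPerm f) ∧
    (S : Set (Fin c → Option (Fin n))).Pairwise mDiff ∧ S.card = k}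

theorem one_mem_mDiffFamilySizes (n : ℕ) : 1 ∈ mDiffFamilySizes n :=
  ⟨n, {fun i ↦ some i}, by simp [validPerm], by simp, card_singleton _⟩

section

variable {n c : ℕ}

theorem not_mDiff_self (f : Fin c → Option (Fin n)) : ¬ mDiff f f := by
  rintro ⟨i, v, w, hv, hw, -, hvw⟩
  exact hvw (Option.some_injective _ (hv.symm.trans hw))

theorem not_mDiff_of_lt_two (hn : n < 2) (f g : Fin c → Option (Fin n)) : ¬ mDiff f g := by
  rintro ⟨i, v, w, -, -, -, hvw⟩
  exact hvw (Fin.ext (by omega))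

def dropFirstEdge (f : Fin c → Option (Fin (n + 2))) : Fin c → Option (Fin n) :=
  fun i ↦ (f i).bind fun v ↦ if h : 2 ≤ (v : ℕ) then some (v.subNat 2 h) else none

theorem dropFirstEdge_eq_some_iff {f : Fin c → Option (Fin (n + 2))} {i : Fin c} {w : Fin n} :
    dropFirstEdge f i = some w ↔ f i = some (w.addNat 2) := by
  cases hfi : f i with
  | none => simp [dropFirstEdge, hfi]
  | some v =>
    simp only [dropFirstEdge, hfi, Option.bind_some, Option.some.injEq]
    split_ifs with h
    · simp [Fin.ext_iff]; omega
    · simp [Fin.ext_iff]; omega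

theorem validPerm.dropFirstEdge {f : Fin c → Option (Fin (n + 2))} (hf : validPerm f) :
    validPerm (dropFirstEdge f) := fun w ↦ by
  simpa only [dropFirstEdge_eq_some_iff] using hf (w.addNat 2)

theorem mDiff_dropFirstEdge {f g : Fin c → Option (Fin (n + 2))} (hfg : mDiff f g)
    (h01 : ∀ i, f i = some 0 → g i ≠ some 1) (h10 : ∀ i, f i = some 1 → g i ≠ some 0) :
    mDiff (dropFirstEdge f) (dropFirstEdge g) := by
  obtain ⟨i, v, w, hv, hw, hvw, hne⟩ := hfg
  by_cases h2 : 2 ≤ (v : ℕ)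
  · have h2' : 2 ≤ (w : ℕ) := by omega
    refine ⟨i, v.subNat 2 h2, w.subNat 2 h2', ?_, ?_, ?_, ?_⟩
    · rwa [dropFirstEdge_eq_some_iff, Fin.addNat_subNat]
    · rwa [dropFirstEdge_eq_some_iff, Fin.addNat_subNat]
    · simp only [Fin.val_subNat]; omega
    · simp only [ne_eq, Fin.ext_iff, Fin.val_subNat] at hne ⊢; omega
  · exfalso
    rcases (by omega : (v : ℕ) = 0 ∧ (w : ℕ) = 1 ∨ (v : ℕ) = 1 ∧ (w : ℕ) = 0) with
      ⟨hv0, hw1⟩ | ⟨hv1, hw0⟩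
    · obtain rfl : v = 0 := Fin.ext hv0
      obtain rfl : w = 1 := Fin.ext (by simp [hw1])
      exact h01 i hv hw
    · obtain rfl : v = 1 := Fin.ext (by simp [hv1])
      obtain rfl : w = 0 := Fin.ext hw0
      exact h10 i hv hw

theorem card_mem_mDiffFamilySizes_of_dropFirstEdge {T : Finset (Fin c → Option (Fin (n + 2)))}
    (hv : ∀ f ∈ T, validPerm f)
    (hp : (T : Set (Fin c → Option (Fin (n + 2)))).Pairwise (mDiff on dropFirstEdge)) :
    #T ∈ mDiffFamilySizes n := by
  have hinj : Set.InjOn dropFirstEdge (T : Set (Fin c → Option (Fin (n + 2)))) :=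
    fun f hf g hg h ↦ by_contra fun hfg ↦ not_mDiff_self _ (by simpa [onFun, h] using hp hf hg hfg)
  refine ⟨c, T.image dropFirstEdge, ?_, ?_, card_image_of_injOn hinj⟩
  · simp only [mem_image, forall_exists_index, and_imp, forall_apply_eq_imp_iff₂]
    exact fun f hf ↦ (hv f hf).dropFirstEdge
  · rw [coe_image]
    exact hinj.pairwise_image.mpr hp

theorem card_lt_four_mul_finfM {S : Finset (Fin c → Option (Fin (n + 2)))}
    (hv : ∀ f ∈ S, validPerm f) (hp : (S : Set (Fin c → Option (Fin (n + 2)))).Pairwise mDiff)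
    (hbdd : BddAbove (mDiffFamilySizes n)) : #S < 4 * FinfM n := by
  rcases S.eq_empty_or_nonempty with rfl | hS
  · exact Nat.mul_pos four_pos (le_csSup hbdd (one_mem_mDiffFamilySizes n))
  have : Nonempty (Fin c) := ⟨(hv _ hS.choose_spec 0).exists.choose⟩
  choose! A hA using fun f hf ↦ hv f hf 0
  choose! B hB using fun f hf ↦ hv f hf 1
  have hAB : ∀ f ∈ S, A f ≠ B f := fun f hf h ↦ by
    simpa [Fin.ext_iff, h, (hB f hf).1] using (hA f hf).1
  obtain ⟨χ, hχ⟩ := exists_lt_four_mul_card_filter hS hAB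
  set T := {f ∈ S | χ (A f) = true ∧ χ (B f) = false}
  have hTS : T ⊆ S := filter_subset _ _
  have hcol : ∀ f ∈ T, ∀ i, (f i = some 0 → χ i = true) ∧ (f i = some 1 → χ i = false) := by
    intro f hf i
    obtain ⟨hfS, h0, h1⟩ := mem_filter.mp hf
    exact ⟨fun h ↦ (hA f hfS).2 i h ▸ h0, fun h ↦ (hB f hfS).2 i h ▸ h1⟩
  have hT : (T : Set (Fin c → Option (Fin (n + 2)))).Pairwise (mDiff on dropFirstEdge) :=
    fun f hf g hg hfg ↦ mDiff_dropFirstEdge (hp (hTS hf) (hTS hg) hfg)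
      (fun i hf0 hg1 ↦ by simpa [(hcol f hf i).1 hf0] using (hcol g hg i).2 hg1)
      (fun i hf1 hg0 ↦ by simpa [(hcol f hf i).2 hf1] using (hcol g hg i).1 hg0)
  calc #S < 4 * #T := hχ
    _ ≤ 4 * FinfM n := Nat.mul_le_mul_left 4 (le_csSup hbdd
        (card_mem_mDiffFamilySizes_of_dropFirstEdge (fun f hf ↦ hv f (hTS hf)) hT))

end

theorem bddAbove_mDiffFamilySizes_of_lt_two {n : ℕ} (hn : n < 2) :
    BddAbove (mDiffFamilySizes n) := by
  refine ⟨1, ?_⟩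
  rintro _ ⟨c, S, -, hp, rfl⟩
  exact card_le_one.mpr fun f hf g hg ↦
    by_contra fun hfg ↦ not_mDiff_of_lt_two hn _ _ (hp hf hg hfg)

theorem bddAbove_mDiffFamilySizes : ∀ n, BddAbove (mDiffFamilySizes n)
  | 0 => bddAbove_mDiffFamilySizes_of_lt_two (by norm_num)
  | 1 => bddAbove_mDiffFamilySizes_of_lt_two (by norm_num)
  | n + 2 => by
    refine ⟨4 * FinfM n, ?_⟩
    rintro _ ⟨c, S, hv, hp, rfl⟩
    exact (card_lt_four_mul_finfM hv hp (bddAbove_mDiffFamilySizes n)).le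

theorem finfM_add_two_lt (n : ℕ) : FinfM (n + 2) < 4 * FinfM n := by
  obtain ⟨c, S, hv, hp, hS⟩ := Nat.sSup_mem ⟨1, one_mem_mDiffFamilySizes (n + 2)⟩
    (bddAbove_mDiffFamilySizes (n + 2))
  change sSup (mDiffFamilySizes (n + 2)) < _
  rw [← hS]
  exact card_lt_four_mul_finfM hv hp (bddAbove_mDiffFamilySizes n)

theorem finfM_add_two_mul_le (n t : ℕ) : FinfM (n + 2 * t) ≤ 4 ^ t * FinfM n := by
  induction t with
  | zero => simp
  | succ t ih =>
    calc FinfM (n + 2 * (t + 1)) = FinfM (n + 2 * t + 2) := by ring_nf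
      _ ≤ 4 * FinfM (n + 2 * t) := (finfM_add_two_lt _).le
      _ ≤ 4 ^ (t + 1) * FinfM n := by rw [pow_succ', mul_assoc]; exact Nat.mul_le_mul_left 4 ih

theorem stmt17 (n : ℕ) (hn : Even n) (h4 : 4 < n) (h9 : FinfM 4 = 9) :
    FinfM n < 4 * FinfM (n - 2) ∧ FinfM n < 9 * 2 ^ (n - 4) := by
  obtain ⟨t, rfl⟩ : ∃ t, n = 4 + 2 * t + 2 := by
    obtain ⟨r, rfl⟩ := hn
    exact ⟨r - 3, by omega⟩
  have hlt := finfM_add_two_lt (4 + 2 * t)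
  refine ⟨by simpa using hlt, ?_⟩
  calc FinfM (4 + 2 * t + 2) < 4 * FinfM (4 + 2 * t) := hlt
    _ ≤ 4 * (4 ^ t * FinfM 4) := Nat.mul_le_mul_left 4 (finfM_add_two_mul_le 4 t)
    _ = 9 * 2 ^ (4 + 2 * t + 2 - 4) := by
      rw [h9, show 4 + 2 * t + 2 - 4 = 2 * (t + 1) by omega, pow_mul]
      ring
end

section
/- For each integer c ≥ 2, let A_c be the family of all c(c−1) partial permutations placing values 1 and 2 at two distinct positions among {1,…,c} (with c−2 blanks). Then the independence number of the conflict graph H_{A_c} equals ⌊c/2⌋·⌈c/2⌉, and hence α(H_{A_c})/|A_c| = ⌊c/2⌋·⌈c/2⌉/(c(c−1)) → 1/4 as c → ∞. -/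
/-!
A partial permutation with values `0, 1` is determined by the pair `(a, b)` of positions of `0`
and `1`, and two of them, `(a, b)` and `(a', b')`, conflict exactly when `a = b'` or `b = a'`.
So an independent family is a set `S` of pairs whose first coordinates avoid all second
coordinates: the projections of `S` are disjoint sets `A`, `B` of positions with `S ⊆ A × B`,
whence `|S| ≤ |A| |B| ≤ ⌊c/2⌋ ⌈c/2⌉` since `|A| + |B| ≤ c`. Taking `A` the first `⌊c/2⌋`
positions and `B` the rest attains the bound.
-/

open Finset Filter Topology

lemma Nat.four_mul_div_two_mul_succ_div_two_add_mod (n : ℕ) :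
    4 * (n / 2 * ((n + 1) / 2)) + n % 2 = n * n := by
  obtain ⟨k, rfl | rfl⟩ := Nat.even_or_odd' n
  · rw [show 2 * k / 2 = k by omega, show (2 * k + 1) / 2 = k by omega, Nat.mul_mod_right]
    ring
  · rw [show (2 * k + 1) / 2 = k by omega, show (2 * k + 1 + 1) / 2 = k + 1 by omega,
      show (2 * k + 1) % 2 = 1 by omega]
    ring

lemma Nat.mul_le_div_two_mul_succ_div_two {x y n : ℕ} (h : x + y ≤ n) :
    x * y ≤ n / 2 * ((n + 1) / 2) := by
  have hsq : 4 * (x * y) ≤ n * n := by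
    have : 4 * (x * y) ≤ (x + y) * (x + y) := by
      zify; nlinarith [sq_nonneg ((x : ℤ) - y)]
    exact this.trans (Nat.mul_le_mul h h)
  have := Nat.four_mul_div_two_mul_succ_div_two_add_mod n
  have := Nat.mod_lt n two_pos
  nlinarith

lemma Finset.card_le_of_forall_fst_ne_snd {α : Type*} [Fintype α] [DecidableEq α]
    {S : Finset (α × α)} (h : ∀ p ∈ S, ∀ q ∈ S, p.1 ≠ q.2) :
    #S ≤ Fintype.card α / 2 * ((Fintype.card α + 1) / 2) := by
  have hdisj : Disjoint (S.image Prod.fst) (S.image Prod.snd) := by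
    simp only [disjoint_left, mem_image]
    rintro _ ⟨p, hp, rfl⟩ ⟨q, hq, hpq⟩
    exact h p hp q hq hpq.symm
  calc #S ≤ #(S.image Prod.fst ×ˢ S.image Prod.snd) := card_le_card subset_product
    _ = #(S.image Prod.fst) * #(S.image Prod.snd) := card_product _ _
    _ ≤ _ := Nat.mul_le_div_two_mul_succ_div_two <|
      (card_union_of_disjoint hdisj).symm.le.trans (card_le_univ _)

section placement

variable {c : ℕ}

def placement (p : Fin c × Fin c) : Fin c → Option (Fin 2) :=
  fun i => if i = p.1 then some 0 else if i = p.2 then some 1 else none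

lemma placement_eq_some_zero_iff {p : Fin c × Fin c} {i : Fin c} :
    placement p i = some 0 ↔ i = p.1 := by
  unfold placement; split_ifs <;> simp_all

lemma placement_eq_some_one_iff {p : Fin c × Fin c} (hp : p.1 ≠ p.2) {i : Fin c} :
    placement p i = some 1 ↔ i = p.2 := by
  unfold placement; split_ifs <;> simp_all

lemma validPerm2_placement {p : Fin c × Fin c} (hp : p.1 ≠ p.2) :
    validPerm2 (placement p) := by
  intro v
  fin_cases v
  · exact ⟨p.1, placement_eq_some_zero_iff.2 rfl, fun _ => placement_eq_some_zero_iff.1⟩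
  · exact ⟨p.2, (placement_eq_some_one_iff hp).2 rfl, fun _ => (placement_eq_some_one_iff hp).1⟩

lemma exists_eq_placement_of_validPerm2 {f : Fin c → Option (Fin 2)} (hf : validPerm2 f) :
    ∃ p : Fin c × Fin c, p.1 ≠ p.2 ∧ placement p = f := by
  obtain ⟨a, ha, ha'⟩ := hf 0
  obtain ⟨b, hb, hb'⟩ := hf 1
  have hab : a ≠ b := by rintro rfl; simp_all
  refine ⟨(a, b), hab, funext fun i => ?_⟩
  rcases hfi : f i with _ | v
  · unfold placement
    split_ifs <;> simp_all
  · fin_cases v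
    · simpa [placement_eq_some_zero_iff] using ha' i hfi
    · simpa [placement_eq_some_one_iff (p := (a, b)) hab] using hb' i hfi

lemma setOf_validPerm2 :
    {f : Fin c → Option (Fin 2) | validPerm2 f} = placement '' {p | p.1 ≠ p.2} := by
  ext f
  constructor
  · exact exists_eq_placement_of_validPerm2
  · rintro ⟨p, hp, rfl⟩
    exact validPerm2_placement hp

lemma placement_injOn : Set.InjOn (placement (c := c)) {p | p.1 ≠ p.2} := by
  intro p hp q hq hpq
  refine Prod.ext ?_ ?_
  · exact placement_eq_some_zero_iff.1 (hpq ▸ placement_eq_some_zero_iff.2 rfl)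
  · exact (placement_eq_some_one_iff hq).1 (hpq ▸ (placement_eq_some_one_iff hp).2 rfl)

lemma conflict_placement_iff {p q : Fin c × Fin c} (hp : p.1 ≠ p.2) (hq : q.1 ≠ q.2) :
    conflict (placement p) (placement q) ↔ p.1 = q.2 ∨ p.2 = q.1 := by
  simp only [conflict, placement_eq_some_zero_iff, placement_eq_some_one_iff hp,
    placement_eq_some_one_iff hq]
  constructor
  · rintro ⟨i, ⟨h1, h2⟩ | ⟨h1, h2⟩⟩
    exacts [.inl (h1 ▸ h2), .inr (h1 ▸ h2)]
  · rintro (h | h)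
    exacts [⟨p.1, .inl ⟨rfl, h⟩⟩, ⟨p.2, .inr ⟨rfl, h⟩⟩]

lemma pairwise_not_conflict_image_placement_iff {S : Set (Fin c × Fin c)}
    (hS : ∀ p ∈ S, p.1 ≠ p.2) :
    (placement '' S).Pairwise (fun f g => ¬ conflict f g) ↔ ∀ p ∈ S, ∀ q ∈ S, p.1 ≠ q.2 := by
  constructor
  · intro h p hp q hq hpq
    have hne : placement p ≠ placement q := by
      rintro heq
      exact hS p hp (hpq.trans (congrArg Prod.snd (placement_injOn (hS p hp) (hS q hq) heq)).symm)
    exact h ⟨p, hp, rfl⟩ ⟨q, hq, rfl⟩ hne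
      ((conflict_placement_iff (hS p hp) (hS q hq)).2 (.inl hpq))
  · rintro h _ ⟨p, hp, rfl⟩ _ ⟨q, hq, rfl⟩ - hconf
    rcases (conflict_placement_iff (hS p hp) (hS q hq)).1 hconf with hpq | hqp
    exacts [h p hp q hq hpq, h q hq p hp hqp.symm]

end placement

lemma ncard_setOf_validPerm2 (c : ℕ) :
    {f : Fin c → Option (Fin 2) | validPerm2 f}.ncard = c * (c - 1) := by
  rw [setOf_validPerm2, placement_injOn.ncard_image,
    show {p : Fin c × Fin c | p.1 ≠ p.2} = ↑(univ : Finset (Fin c)).offDiag by ext; simp,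
    Set.ncard_coe_finset, offDiag_card, card_univ, Fintype.card_fin, Nat.mul_sub_one]

lemma exists_validPerm2_pairwise_not_conflict_card_eq (c : ℕ) :
    ∃ T : Finset (Fin c → Option (Fin 2)), (∀ f ∈ T, validPerm2 f) ∧
      (T : Set (Fin c → Option (Fin 2))).Pairwise (fun f g => ¬ conflict f g) ∧
      #T = c / 2 * ((c + 1) / 2) := by
  classical
  set A : Finset (Fin c) := univ.map (Fin.castLEEmb (Nat.div_le_self c 2))
  have hS : ∀ p ∈ (↑(A ×ˢ Aᶜ) : Set (Fin c × Fin c)), p.1 ≠ p.2 := by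
    rintro p hp hp12
    simp [hp12] at hp
  refine ⟨(A ×ˢ Aᶜ).image placement, ?_, ?_, ?_⟩
  · simp only [mem_image]
    rintro _ ⟨p, hp, rfl⟩
    exact validPerm2_placement (hS p hp)
  · rw [coe_image, pairwise_not_conflict_image_placement_iff hS]
    intro p hp q hq hpq
    simp only [coe_product, coe_compl, Set.mem_prod, Set.mem_compl_iff, mem_coe] at hp hq
    exact hq.2 (hpq ▸ hp.1)
  · rw [card_image_of_injOn (placement_injOn.mono hS), card_product, card_compl, card_map,
      card_univ, Fintype.card_fin, Fintype.card_fin]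
    congr 1
    omega

lemma card_le_of_validPerm2_pairwise_not_conflict {c : ℕ} {T : Finset (Fin c → Option (Fin 2))}
    (hT : ∀ f ∈ T, validPerm2 f)
    (hind : (T : Set (Fin c → Option (Fin 2))).Pairwise (fun f g => ¬ conflict f g)) :
    #T ≤ c / 2 * ((c + 1) / 2) := by
  classical
  set S := univ.filter (fun p : Fin c × Fin c => p.1 ≠ p.2 ∧ placement p ∈ T)
  have hS : ∀ p ∈ (S : Set (Fin c × Fin c)), p.1 ≠ p.2 := fun p hp => (mem_filter.1 hp).2.1
  have hTS : T = S.image placement := by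
    ext f
    simp only [S, mem_image, mem_filter, mem_univ, true_and]
    constructor
    · intro hf
      obtain ⟨p, hp, rfl⟩ := exists_eq_placement_of_validPerm2 (hT f hf)
      exact ⟨p, ⟨hp, hf⟩, rfl⟩
    · rintro ⟨p, ⟨-, hp⟩, rfl⟩
      exact hp
  rw [hTS, coe_image, pairwise_not_conflict_image_placement_iff hS] at hind
  calc #T ≤ #S := hTS ▸ card_image_le
    _ ≤ _ := by simpa using card_le_of_forall_fst_ne_snd hind

lemma tendsto_div_two_mul_succ_div_two_div_mul_sub_one :
    Tendsto (fun m : ℕ => (((m / 2) * ((m + 1) / 2) : ℕ) : ℝ) / ((m : ℝ) * ((m : ℝ) - 1)))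
      atTop (𝓝 (1 / 4)) := by
  -- `4 ⌊m/2⌋ ⌈m/2⌉ ∈ {m², m² - 1}` squeezes the ratio between `1/4` and `m / (4 (m - 1))`.
  have hupper := (tendsto_natCast_div_add_atTop (-1 : ℝ)).const_mul (1 / 4)
  rw [mul_one] at hupper
  refine tendsto_of_tendsto_of_tendsto_of_le_of_le' tendsto_const_nhds hupper ?_ ?_ <;>
    filter_upwards [eventually_ge_atTop 2] with m hm2
  all_goals
    have key : 4 * ((m / 2 * ((m + 1) / 2) : ℕ) : ℝ) + (m % 2 : ℕ) = m * m := by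
      exact_mod_cast Nat.four_mul_div_two_mul_succ_div_two_add_mod m
    have hr : ((m % 2 : ℕ) : ℝ) ≤ 1 := by exact_mod_cast Nat.le_of_lt_succ (Nat.mod_lt m two_pos)
    have hm : (2 : ℝ) ≤ m := by exact_mod_cast hm2
  · rw [le_div_iff₀ (by nlinarith)]
    nlinarith
  · rw [div_le_iff₀ (by nlinarith),
      show 1 / 4 * ((m : ℝ) / (m + -1)) * (m * (m - 1)) = m * m / 4 by
        field_simp [show (m : ℝ) + -1 ≠ 0 by linarith]; ring]
    linarith

theorem stmt18_general (c : ℕ) :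
    ({f : Fin c → Option (Fin 2) | validPerm2 f}).ncard = c * (c - 1) ∧
    (∃ T : Finset (Fin c → Option (Fin 2)), (∀ f ∈ T, validPerm2 f) ∧
      (T : Set (Fin c → Option (Fin 2))).Pairwise (fun f g => ¬ conflict f g) ∧
      T.card = (c / 2) * ((c + 1) / 2)) ∧
    (∀ T : Finset (Fin c → Option (Fin 2)), (∀ f ∈ T, validPerm2 f) →
      (T : Set (Fin c → Option (Fin 2))).Pairwise (fun f g => ¬ conflict f g) →
      T.card ≤ (c / 2) * ((c + 1) / 2)) ∧
    Filter.Tendsto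
      (fun m : ℕ => (((m / 2) * ((m + 1) / 2) : ℕ) : ℝ) / ((m : ℝ) * ((m : ℝ) - 1)))
      Filter.atTop (nhds (1 / 4)) :=
  ⟨ncard_setOf_validPerm2 c, exists_validPerm2_pairwise_not_conflict_card_eq c,
    fun _ => card_le_of_validPerm2_pairwise_not_conflict,
    tendsto_div_two_mul_succ_div_two_div_mul_sub_one⟩

/-- For `A_c`, the family of all `c(c−1)` partial permutations of `{1,2}` among
`c` positions, the independence number of the conflict graph is exactly
`⌊c/2⌋·⌈c/2⌉`, and the ratio `α(H_{A_c})/|A_c|` tends to `1/4`. -/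
theorem stmt18 (c : ℕ) (hc : 2 ≤ c) :
    ({f : Fin c → Option (Fin 2) | validPerm2 f}).ncard = c * (c - 1) ∧
    (∃ T : Finset (Fin c → Option (Fin 2)), (∀ f ∈ T, validPerm2 f) ∧
      (T : Set (Fin c → Option (Fin 2))).Pairwise (fun f g => ¬ conflict f g) ∧
      T.card = (c / 2) * ((c + 1) / 2)) ∧
    (∀ T : Finset (Fin c → Option (Fin 2)), (∀ f ∈ T, validPerm2 f) →
      (T : Set (Fin c → Option (Fin 2))).Pairwise (fun f g => ¬ conflict f g) →
      T.card ≤ (c / 2) * ((c + 1) / 2)) ∧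
    Filter.Tendsto
      (fun m : ℕ => (((m / 2) * ((m + 1) / 2) : ℕ) : ℝ) / ((m : ℝ) * ((m : ℝ) - 1)))
      Filter.atTop (nhds (1 / 4)) :=
  stmt18_general c
end
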